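/- arXiv:math/0409370 — 3 statements merged into one kernel-verified Lean document; each statement's English description precedes it below -/
import Mathlib

section
/- Let n ≥ 2 and let J : ℂⁿ → ℂⁿ be an ℝ-linear map with J ∘ J = -id such that every complex line through the origin is J-invariant, i.e., J(ℂ·z) ⊆ ℂ·z for every z ∈ ℂⁿ. Then either J(v) = i·v for all v, or J(v) = -i·v for all v. -/
/-- For n ≥ 2, a linear complex structure on ℂⁿ preserving every complex line
through the origin is multiplication by i or by -i. -/
theorem complex_structure_determined_by_lines
    (n : ℕ) (hn : 2 ≤ n)
    (J : (Fin n → ℂ) →ₗ[ℝ] (Fin n → ℂ))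
    (hJ : J ∘ₗ J = -LinearMap.id)
    (hlines : ∀ z v : Fin n → ℂ, v ∈ Submodule.span ℂ {z} → J v ∈ Submodule.span ℂ {z}) :
    (∀ v : Fin n → ℂ, J v = Complex.I • v) ∨
    (∀ v : Fin n → ℂ, J v = (-Complex.I) • v) := by
  classical
  -- every vector is sent to a multiple of itself
  have hcoef : ∀ z : Fin n → ℂ, ∃ c : ℂ, J z = c • z := by
    intro z
    have h := hlines z z (Submodule.mem_span_singleton_self z)
    rw [Submodule.mem_span_singleton] at h
    obtain ⟨c, hc⟩ := h
    exact ⟨c, hc.symm⟩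
  choose f hf using hcoef
  -- the coefficient is the same on linearly independent vectors
  have key : ∀ u z : Fin n → ℂ, u ≠ 0 → z ∉ Submodule.span ℂ {u} → f z = f u := by
    intro u z hu hz
    have hzu : ∀ a b : ℂ, a • z + b • u = 0 → a = 0 ∧ b = 0 := by
      intro a b hab
      by_cases ha : a = 0
      · subst ha
        simp only [zero_smul, zero_add] at hab
        rcases smul_eq_zero.mp hab with h | h
        · exact ⟨rfl, h⟩
        · exact absurd h hu
      · exfalso
        apply hz
        rw [Submodule.mem_span_singleton]
        refine ⟨-b / a, ?_⟩
        have hz' : a • z = (-b) • u := by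
          have := hab
          rw [add_eq_zero_iff_eq_neg] at this
          rw [this, ← neg_smul]
        have : (a⁻¹ * a) • z = (a⁻¹ * (-b)) • u := by
          rw [mul_smul, mul_smul, hz']
        rw [inv_mul_cancel₀ ha, one_smul] at this
        rw [div_eq_inv_mul]
        exact this.symm
    have hsum : f (z + u) • z + f (z + u) • u = f z • z + f u • u := by
      rw [← smul_add, ← hf, map_add, hf, hf]
    have heq : (f z - f (z + u)) • z + (f u - f (z + u)) • u = 0 := by
      calc (f z - f (z + u)) • z + (f u - f (z + u)) • u
          = (f z • z + f u • u) - (f (z + u) • z + f (z + u) • u) := by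
            rw [sub_smul, sub_smul]; abel
        _ = 0 := by rw [← hsum, sub_self]
    obtain ⟨h1, h2⟩ := hzu _ _ heq
    have e1 := sub_eq_zero.mp h1
    have e2 := sub_eq_zero.mp h2
    rw [e1, e2]
  -- basis vectors
  set i0 : Fin n := ⟨0, by omega⟩ with hi0
  set i1 : Fin n := ⟨1, by omega⟩ with hi1
  have hne : i0 ≠ i1 := by simp [hi0, hi1, Fin.ext_iff]
  set e0 : Fin n → ℂ := Pi.single i0 1 with he0
  set e1 : Fin n → ℂ := Pi.single i1 1 with he1
  have he0ne : e0 ≠ 0 := by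
    intro h
    have := congrFun h i0
    simp [he0] at this
  have he1ne : e1 ≠ 0 := by
    intro h
    have := congrFun h i1
    simp [he1] at this
  have he1e0 : e1 ∉ Submodule.span ℂ {e0} := by
    rw [Submodule.mem_span_singleton]
    rintro ⟨t, ht⟩
    have := congrFun ht i1
    simp [he0, he1, Pi.single_eq_of_ne hne.symm] at this
  -- the coefficient is globally constant
  have hall : ∀ z : Fin n → ℂ, z ≠ 0 → f z = f e0 := by
    intro z hzne
    by_cases hz : z ∈ Submodule.span ℂ {e0}
    · -- z is a multiple of e0, compare both with e1
      have hz1 : z ∉ Submodule.span ℂ {e1} := by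
        rw [Submodule.mem_span_singleton] at hz ⊢
        obtain ⟨t, ht⟩ := hz
        rintro ⟨s, hs⟩
        have h0 : t ≠ 0 := by
          rintro rfl
          simp at ht
          exact hzne ht.symm
        have := congrFun ht i0
        have h2 := congrFun hs i0
        simp [he0, he1, Pi.single_eq_of_ne hne] at this h2
        rw [← this] at h2
        exact h0 h2.symm
      have h1 := key e1 z he1ne hz1
      have h2 := key e1 e0 he1ne (by
        rw [Submodule.mem_span_singleton]
        rintro ⟨t, ht⟩
        have := congrFun ht i0
        simp [he0, he1, Pi.single_eq_of_ne hne] at this)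
      rw [h1, h2]
    · exact key e0 z he0ne hz
  set c : ℂ := f e0 with hc
  have hJc : ∀ v : Fin n → ℂ, J v = c • v := by
    intro v
    by_cases hv : v = 0
    · simp [hv]
    · rw [hf v, hall v hv]
  -- J² = -1 forces c² = -1
  have hJJ : J (J e0) = -e0 := by
    have := congrFun (congrArg DFunLike.coe hJ) e0
    simpa using this
  have hcc : (c * c) • e0 = -e0 := by
    rw [← hJJ, hJc e0, hJc (c • e0), smul_smul]
  have hc2 : c * c = -1 := by
    have h : (c * c + 1) • e0 = 0 := by
      rw [add_smul, one_smul, hcc]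
      abel
    rcases smul_eq_zero.mp h with h | h
    · linear_combination h
    · exact absurd h he0ne
  have hci : c = Complex.I ∨ c = -Complex.I := by
    have : (c - Complex.I) * (c + Complex.I) = 0 := by
      ring_nf
      rw [Complex.I_sq]
      linear_combination hc2
    rcases mul_eq_zero.mp this with h | h
    · exact Or.inl (sub_eq_zero.mp h)
    · exact Or.inr (eq_neg_of_add_eq_zero_left h)
  rcases hci with h | h
  · left; intro v; rw [hJc v, h]
  · right; intro v; rw [hJc v, h]
end

section
/- Let A be a real n×n matrix such that -A² is symmetric positive definite. Define j(A) = A·(-A²)^{-1/2}, where (-A²)^{-1/2} denotes the inverse of the unique symmetric positive definite square root of -A². Then j(A)² = -I. Moreover, if J is a real matrix with J² = -I and -J² = I positive definite trivially, then j(J) = J; i.e., j is a retraction onto complex structures among matrices A with -A² symmetric positive definite. -/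
open scoped ComplexOrder in
/-- The positive semidefinite square root of a positive semidefinite matrix (as defined in
the older Mathlib, where `Matrix.PosSemidef.sqrt` existed). -/
noncomputable def Matrix.PosSemidef.sqrt {n : Type*} {𝕜 : Type*} [Fintype n] [RCLike 𝕜]
    [DecidableEq n] {A : Matrix n n 𝕜} (hA : A.PosSemidef) : Matrix n n 𝕜 :=
  hA.1.eigenvectorUnitary.1 * Matrix.diagonal ((↑) ∘ (Real.sqrt ·) ∘ hA.1.eigenvalues) *
    (star hA.1.eigenvectorUnitary : Matrix n n 𝕜)

/-! `(-A²)^{1/2}` is a continuous functional calculus of `-A²`, so it commutes with `A`, and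
hence `(A (-A²)^{-1/2})² = A² (-A²)^{-1} = -1`. -/

open scoped ComplexOrder

theorem mul_ringInverse_mul_self_eq_neg_one {R : Type*} [Ring R] {a s : R}
    (hs : IsUnit s) (has : Commute a s) (hss : s * s = -(a * a)) :
    a * Ring.inverse s * (a * Ring.inverse s) = -1 := by
  obtain ⟨u, rfl⟩ := hs
  rw [Ring.inverse_unit, has.units_inv_right.symm.mul_mul_mul_comm, ← neg_neg (a * a), ← hss,
    neg_mul, mul_assoc, Units.mul_inv_cancel_left, Units.mul_inv]

namespace Matrix

variable {n 𝕜 : Type*} [Fintype n] [DecidableEq n] [RCLike 𝕜] {A : Matrix n n 𝕜}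

namespace PosSemidef

theorem sqrt_eq_cfc (hA : A.PosSemidef) : hA.sqrt = cfc Real.sqrt A := by
  rw [hA.1.cfc_eq, IsHermitian.cfc, Unitary.conjStarAlgAut_apply]
  rfl

theorem sqrt_mul_self (hA : A.PosSemidef) : hA.sqrt * hA.sqrt = A := by
  rw [sqrt_eq_cfc, ← cfc_mul ..]
  conv_rhs => rw [← cfc_id' ℝ A hA.1.isSelfAdjoint]
  refine cfc_congr fun x hx ↦ Real.mul_self_sqrt ?_
  obtain ⟨i, rfl⟩ := hA.1.spectrum_real_eq_range_eigenvalues ▸ hx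
  exact hA.eigenvalues_nonneg i

theorem commute_sqrt {X : Matrix n n 𝕜} (hA : A.PosSemidef) (hX : Commute X A) :
    Commute X hA.sqrt :=
  hA.sqrt_eq_cfc ▸ (hX.symm.cfc_real _).symm

theorem sqrt_eq_one (hA : A.PosSemidef) (h : A = 1) : hA.sqrt = 1 := by
  subst h
  rw [sqrt_eq_cfc, ← map_one (algebraMap ℝ (Matrix n n 𝕜)), cfc_algebraMap, Real.sqrt_one]

end PosSemidef

theorem PosDef.isUnit_sqrt (hA : A.PosDef) : IsUnit hA.posSemidef.sqrt :=
  isUnit_of_mul_isUnit_left (hA.posSemidef.sqrt_mul_self ▸ hA.isUnit)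

end Matrix

/-- The canonical retraction j(A) = A·(-A²)^{-1/2} onto linear complex
structures: if -A² is symmetric positive definite then j(A)² = -1, and
j fixes every complex structure J (J² = -1). -/
theorem retraction_onto_complex_structures
    (n : ℕ) (A : Matrix (Fin n) (Fin n) ℝ)
    (hA : (-(A * A)).PosDef) :
    (A * (hA.posSemidef.sqrt)⁻¹) * (A * (hA.posSemidef.sqrt)⁻¹) = -1 ∧
    (∀ (J : Matrix (Fin n) (Fin n) ℝ) (hJ : J * J = -1)
      (hJ' : (-(J * J)).PosDef), J * (hJ'.posSemidef.sqrt)⁻¹ = J) := by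
  constructor
  · have hAA : Commute A (-(A * A)) := ((Commute.refl A).mul_right (Commute.refl A)).neg_right
    rw [Matrix.nonsing_inv_eq_ringInverse]
    exact mul_ringInverse_mul_self_eq_neg_one hA.isUnit_sqrt
      (hA.posSemidef.commute_sqrt hAA) hA.posSemidef.sqrt_mul_self
  · intro J hJ hJ'
    rw [hJ'.posSemidef.sqrt_eq_one (by rw [hJ, neg_neg]), inv_one, mul_one]
end

section
/- Let X and Y be smooth manifolds with X compact, f : X → Y a smooth map, ω_Y a symplectic form on Y, and J a continuous almost-complex structure on X such that f*ω_Y(v, Jv) > 0 for all tangent vectors v ∉ ker df. Let η be a closed 2-form on X such that η(v, Jv) > 0 for every nonzero v ∈ ker df_x, for every x ∈ X. Then there exists t₀ > 0 such that for all t ∈ (0, t₀), the closed 2-form ω_t = t·η + f*ω_Y tames J (i.e., ω_t(v, Jv) > 0 for all nonzero tangent vectors v), and hence ω_t is a symplectic form on X. -/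
open scoped Manifold

/-!
On the tangent bundle, `g v = ω_Y(df v, df (J v)) ≥ 0` and `h v = η(v, J v)` are continuous
and quadratic in `v`, and `h v > 0` at the nonzero `v` where `g v = 0`. By homogeneity it
suffices to show `t * h + g > 0` on a compact set of nonzero vectors meeting every ray; unit
spheres in finitely many local trivializations give one. On that set `g ≥ m > 0` where
`h ≤ 0`, by compactness, and `|h| ≤ C`, so every `t < m / C` works.
-/

open Set Bundle Topology

theorem IsCompact.exists_pos_forall_pos_mul_add {Z : Type*} [TopologicalSpace Z] {K : Set Z}
    (hK : IsCompact K) {g h : Z → ℝ} (hg : Continuous g) (hh : Continuous h)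
    (hg_nonneg : ∀ p ∈ K, 0 ≤ g p) (hg_pos : ∀ p ∈ K, h p ≤ 0 → 0 < g p) :
    ∃ t₀ > (0 : ℝ), ∀ t, 0 < t → t < t₀ → ∀ p ∈ K, 0 < t * h p + g p := by
  obtain ⟨m, hm, hgm⟩ := (hK.inter_right (isClosed_le hh continuous_const)).exists_forall_le'
    hg.continuousOn fun p hp => hg_pos p hp.1 hp.2
  obtain ⟨C, hC⟩ := hK.exists_bound_of_continuousOn hh.continuousOn
  have hC₁ : 0 < max C 1 := lt_max_of_lt_right one_pos
  refine ⟨m / max C 1, div_pos hm hC₁, fun t ht ht₀ p hp => ?_⟩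
  rcases le_or_gt (h p) 0 with hhp | hhp
  · have hth : t * -h p ≤ t * max C 1 :=
      mul_le_mul_of_nonneg_left ((neg_le_abs _).trans ((hC p hp).trans (le_max_left _ _))) ht.le
    have htC : t * max C 1 < m := (lt_div_iff₀ hC₁).1 ht₀
    linarith [hgm p ⟨hp, hhp⟩]
  · exact add_pos_of_pos_of_nonneg (mul_pos ht hhp) (hg_nonneg p hp)

namespace Bundle

variable {B F : Type*} [TopologicalSpace B] [NormedAddCommGroup F] [NormedSpace ℝ F]
  {V : B → Type*} [∀ b, AddCommMonoid (V b)] [∀ b, Module ℝ (V b)]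

/-- A substitute for the unit sphere bundle over `s` that needs no fibre metric. -/
def MeetsNonzeroRaysOver (Z : Set (TotalSpace F V)) (s : Set B) : Prop :=
  (∀ p ∈ Z, p.2 ≠ 0) ∧
    ∀ x ∈ s, ∀ v : V x, v ≠ 0 → ∃ c : ℝ, 0 < c ∧ ∃ u, (⟨x, u⟩ : TotalSpace F V) ∈ Z ∧ v = c • u

variable [ProperSpace F] [TopologicalSpace (TotalSpace F V)] [∀ b, TopologicalSpace (V b)]
  [FiberBundle F V] [VectorBundle ℝ F V]

variable (F V) in
theorem exists_isCompact_meetsNonzeroRaysOver_nhds [LocallyCompactSpace B] (x₀ : B) :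
    ∃ K ∈ 𝓝 x₀, ∃ Z : Set (TotalSpace F V), IsCompact Z ∧ MeetsNonzeroRaysOver Z K := by
  set e := trivializationAt F V x₀
  obtain ⟨K, hK, hKe, hKc⟩ := local_compact_nhds
    (e.open_baseSet.mem_nhds (FiberBundle.mem_baseSet_trivializationAt' x₀))
  refine ⟨K, hK, (fun z : B × F => TotalSpace.mk' F z.1 (e.symm z.1 z.2)) ''
    (K ×ˢ Metric.sphere 0 1), (hKc.prod (isCompact_sphere 0 1)).image_of_continuousOn
      (e.continuousOn_symm.mono (prod_mono hKe (subset_univ _))), ?_, ?_⟩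
  · rintro _ ⟨⟨b, y⟩, ⟨hb, hy⟩, rfl⟩
    change e.symm b y ≠ 0
    rw [← e.continuousLinearEquivAt_symm_apply ℝ b (hKe hb)]
    exact (map_ne_zero_iff _ (e.continuousLinearEquivAt ℝ b (hKe hb)).symm.injective).2
      (ne_zero_of_mem_unit_sphere ⟨y, hy⟩)
  · intro x hx v hv
    set L := e.continuousLinearEquivAt ℝ x (hKe hx)
    have hc : 0 < ‖L v‖ := norm_pos_iff.2 ((map_ne_zero_iff _ L.injective).2 hv)
    refine ⟨‖L v‖, hc, ‖L v‖⁻¹ • v, ⟨(x, L (‖L v‖⁻¹ • v)), ⟨hx, ?_⟩, ?_⟩, ?_⟩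
    · rw [mem_sphere_zero_iff_norm, map_smul, norm_smul, norm_inv, norm_norm,
        inv_mul_cancel₀ hc.ne']
    · simp only [TotalSpace.mk', ← e.continuousLinearEquivAt_symm_apply ℝ x (hKe hx)]
      exact congrArg _ (L.symm_apply_apply _)
    · rw [smul_smul, mul_inv_cancel₀ hc.ne', one_smul]

variable (F V) in
theorem exists_isCompact_meetsNonzeroRaysOver_univ [LocallyCompactSpace B] [CompactSpace B] :
    ∃ Z : Set (TotalSpace F V), IsCompact Z ∧ MeetsNonzeroRaysOver Z univ := by
  choose K hK Z hZc hZ using exists_isCompact_meetsNonzeroRaysOver_nhds F V (B := B)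
  obtain ⟨s, hs⟩ := CompactSpace.elim_nhds_subcover K hK
  refine ⟨⋃ x ∈ s, Z x, s.isCompact_biUnion fun x _ => hZc x, ?_, fun y _ v hv => ?_⟩
  · simp only [mem_iUnion]
    rintro p ⟨x, -, hp⟩
    exact (hZ x).1 p hp
  · obtain ⟨x, hxs, hy⟩ := mem_iUnion₂.1 (hs ▸ mem_univ y : y ∈ ⋃ x ∈ s, K x)
    obtain ⟨c, hc, u, hu, rfl⟩ := (hZ x).2 y hy v hv
    exact ⟨c, hc, u, mem_iUnion₂.2 ⟨x, hxs, hu⟩, rfl⟩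

theorem exists_pos_forall_pos_mul_add [LocallyCompactSpace B] [CompactSpace B]
    {g h : TotalSpace F V → ℝ} (hg : Continuous g) (hh : Continuous h)
    (hg_smul : ∀ x (c : ℝ) (v : V x), g ⟨x, c • v⟩ = c ^ 2 * g ⟨x, v⟩)
    (hh_smul : ∀ x (c : ℝ) (v : V x), h ⟨x, c • v⟩ = c ^ 2 * h ⟨x, v⟩)
    (hg_nonneg : ∀ p, 0 ≤ g p) (hg_pos : ∀ p : TotalSpace F V, p.2 ≠ 0 → h p ≤ 0 → 0 < g p) :
    ∃ t₀ > (0 : ℝ), ∀ t, 0 < t → t < t₀ → ∀ p : TotalSpace F V, p.2 ≠ 0 →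
      0 < t * h p + g p := by
  obtain ⟨Z, hZc, hZ0, hZ⟩ := exists_isCompact_meetsNonzeroRaysOver_univ F V (B := B)
  obtain ⟨t₀, ht₀, hpos⟩ := hZc.exists_pos_forall_pos_mul_add hg hh (fun p _ => hg_nonneg p)
    fun p hp => hg_pos p (hZ0 p hp)
  refine ⟨t₀, ht₀, fun t ht htt₀ ⟨x, v⟩ hv => ?_⟩
  obtain ⟨c, hc, u, hu, rfl⟩ := hZ x (mem_univ x) v hv
  rw [hg_smul, hh_smul, show t * (c ^ 2 * h ⟨x, u⟩) + c ^ 2 * g ⟨x, u⟩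
    = c ^ 2 * (t * h ⟨x, u⟩ + g ⟨x, u⟩) by ring]
  exact mul_pos (pow_pos hc 2) (hpos t ht htt₀ _ hu)

end Bundle

theorem thurston_taming_general
    {E : Type*} [NormedAddCommGroup E] [NormedSpace ℝ E] [FiniteDimensional ℝ E]
    {H : Type*} [TopologicalSpace H] (I : ModelWithCorners ℝ E H)
    {E' : Type*} [NormedAddCommGroup E'] [NormedSpace ℝ E']
    {H' : Type*} [TopologicalSpace H'] (I' : ModelWithCorners ℝ E' H')
    (X : Type*) [TopologicalSpace X] [ChartedSpace H X]
    [IsManifold I (⊤ : ℕ∞) X] [CompactSpace X]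
    (Y : Type*) [TopologicalSpace Y] [ChartedSpace H' Y]
    (f : X → Y)
    -- the symplectic form ω_Y on Y, as a family of alternating nondegenerate
    -- bilinear forms on the tangent spaces
    (ωY : ∀ y : Y, TangentSpace I' y →L[ℝ] TangentSpace I' y →L[ℝ] ℝ)
    -- the continuous almost-complex structure J on X
    (J : ∀ x : X, TangentSpace I x →L[ℝ] TangentSpace I x)
    -- the 2-form η on X
    (η : ∀ x : X, TangentSpace I x →L[ℝ] TangentSpace I x →L[ℝ] ℝ)
    -- continuity of the relevant data, expressed on the tangent bundle
    (hgcont : Continuous fun p : TangentBundle I X =>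
      ωY (f p.proj) (mfderiv I I' f p.proj p.snd)
        (mfderiv I I' f p.proj (J p.proj p.snd)))
    (hhcont : Continuous fun p : TangentBundle I X => η p.proj p.snd (J p.proj p.snd))
    -- J is (ω_Y, f)-tame
    (htame : ∀ (x : X) (v : TangentSpace I x), mfderiv I I' f x v ≠ 0 →
      0 < ωY (f x) (mfderiv I I' f x v) (mfderiv I I' f x (J x v)))
    -- η tames J on each ker df_x
    (hη : ∀ (x : X) (v : TangentSpace I x), v ≠ 0 → mfderiv I I' f x v = 0 →
      0 < η x v (J x v)) :
    ∃ t₀ > (0 : ℝ), ∀ t : ℝ, 0 < t → t < t₀ →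
      (∀ (x : X) (v : TangentSpace I x), v ≠ 0 →
        0 < t * η x v (J x v) +
          ωY (f x) (mfderiv I I' f x v) (mfderiv I I' f x (J x v))) ∧
      (∀ (x : X) (v : TangentSpace I x), v ≠ 0 → ∃ w : TangentSpace I x,
        t * η x v w + ωY (f x) (mfderiv I I' f x v) (mfderiv I I' f x w) ≠ 0) := by
  have : LocallyCompactSpace X := Manifold.locallyCompact_of_finiteDimensional I
  obtain ⟨t₀, ht₀, hpos⟩ := Bundle.exists_pos_forall_pos_mul_add hgcont hhcont
    (fun x c v => by simp only [map_smul, smul_apply, smul_eq_mul]; ring)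
    (fun x c v => by simp only [map_smul, smul_apply, smul_eq_mul]; ring)
    (fun p => (eq_or_ne (mfderiv I I' f p.proj p.snd) 0).elim
      (fun hdf => by simp [hdf]) fun hdf => (htame _ _ hdf).le)
    fun p hv hle => htame _ _ fun hdf => hle.not_gt (hη _ _ hv hdf)
  exact ⟨t₀, ht₀, fun t ht htt₀ => ⟨fun x v hv => hpos t ht htt₀ ⟨x, v⟩ hv,
    fun x v hv => ⟨J x v, (hpos t ht htt₀ ⟨x, v⟩ hv).ne'⟩⟩⟩

/-- Thurston's argument (Theorem 2.4 of the paper, case C = ∅): if J is an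
(ω_Y, f)-tame almost-complex structure on a compact manifold X and η is a
2-form on X taming J on each ker df_x, then ω_t = t·η + f*ω_Y tames J for
all sufficiently small t > 0; hence each ω_t is nondegenerate (so, being
closed, symplectic). -/
theorem thurston_taming
    {E : Type*} [NormedAddCommGroup E] [NormedSpace ℝ E] [FiniteDimensional ℝ E]
    {H : Type*} [TopologicalSpace H] (I : ModelWithCorners ℝ E H)
    {E' : Type*} [NormedAddCommGroup E'] [NormedSpace ℝ E'] [FiniteDimensional ℝ E']
    {H' : Type*} [TopologicalSpace H'] (I' : ModelWithCorners ℝ E' H')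
    (X : Type*) [TopologicalSpace X] [ChartedSpace H X]
    [IsManifold I (⊤ : ℕ∞) X] [CompactSpace X]
    (Y : Type*) [TopologicalSpace Y] [ChartedSpace H' Y]
    [IsManifold I' (⊤ : ℕ∞) Y]
    (f : X → Y) (hf : ContMDiff I I' (⊤ : ℕ∞) f)
    -- the symplectic form ω_Y on Y, as a family of alternating nondegenerate
    -- bilinear forms on the tangent spaces
    (ωY : ∀ y : Y, TangentSpace I' y →L[ℝ] TangentSpace I' y →L[ℝ] ℝ)
    (hωYalt : ∀ (y : Y) (w : TangentSpace I' y), ωY y w w = 0)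
    (hωYnd : ∀ (y : Y) (w : TangentSpace I' y), w ≠ 0 → ∃ w', ωY y w w' ≠ 0)
    -- the continuous almost-complex structure J on X
    (J : ∀ x : X, TangentSpace I x →L[ℝ] TangentSpace I x)
    (hJsq : ∀ (x : X) (v : TangentSpace I x), J x (J x v) = -v)
    -- the 2-form η on X
    (η : ∀ x : X, TangentSpace I x →L[ℝ] TangentSpace I x →L[ℝ] ℝ)
    (hηalt : ∀ (x : X) (v : TangentSpace I x), η x v v = 0)
    -- continuity of the relevant data, expressed on the tangent bundle
    (hgcont : Continuous fun p : TangentBundle I X =>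
      ωY (f p.proj) (mfderiv I I' f p.proj p.snd)
        (mfderiv I I' f p.proj (J p.proj p.snd)))
    (hhcont : Continuous fun p : TangentBundle I X => η p.proj p.snd (J p.proj p.snd))
    -- J is (ω_Y, f)-tame
    (htame : ∀ (x : X) (v : TangentSpace I x), mfderiv I I' f x v ≠ 0 →
      0 < ωY (f x) (mfderiv I I' f x v) (mfderiv I I' f x (J x v)))
    -- η tames J on each ker df_x
    (hη : ∀ (x : X) (v : TangentSpace I x), v ≠ 0 → mfderiv I I' f x v = 0 →
      0 < η x v (J x v)) :
    ∃ t₀ > (0 : ℝ), ∀ t : ℝ, 0 < t → t < t₀ →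
      (∀ (x : X) (v : TangentSpace I x), v ≠ 0 →
        0 < t * η x v (J x v) +
          ωY (f x) (mfderiv I I' f x v) (mfderiv I I' f x (J x v))) ∧
      (∀ (x : X) (v : TangentSpace I x), v ≠ 0 → ∃ w : TangentSpace I x,
        t * η x v w + ωY (f x) (mfderiv I I' f x v) (mfderiv I I' f x w) ≠ 0) :=
  thurston_taming_general I I' X Y f ωY J η hgcont hhcont htame hη
end
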